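/- Let C be a triangulated category. The assignments (T, F) ↦ (Defl T, Defl F) and (L, R) ↦ (Cocone L, Cocone R) are mutually inverse: for every t-structure (T, F) in C one has Cocone(Defl T) = T and Cocone(Defl F) = F, and for every deflation factorization system (L, R) in C one has Defl(Cocone L) = L and Defl(Cocone R) = R. -/

import Mathlib

open CategoryTheory CategoryTheory.Limits CategoryTheory.Pretriangulated

namespace TriangFS

variable {C : Type*} [Category C] [Preadditive C] [HasZeroObject C]
  [HasShift C ℤ] [∀ n : ℤ, (shiftFunctor C n).Additive]
  [Pretriangulated C] [IsTriangulated C]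

/-- `K` is a cocone of `f : X ⟶ Y` if it fits in a distinguished triangle
`K ⟶ X ⟶ Y ⟶ K⟦1⟧`. -/
def IsCoconeOf {X Y : C} (f : X ⟶ Y) (K : C) : Prop :=
  ∃ (g : K ⟶ X) (h : Y ⟶ K⟦(1 : ℤ)⟧), Triangle.mk g f h ∈ distTriang C

/-- `l ⊥ r` iff `Hom(K_l, K_r) = 0` and `Hom(K_l, K_r⟦-1⟧) = 0` for cocones
`K_l` of `l` and `K_r` of `r`. -/
def CoconePerp {X Y Z W : C} (l : X ⟶ Y) (r : Z ⟶ W) : Prop :=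
  ∀ (Kl Kr : C), IsCoconeOf l Kl → IsCoconeOf r Kr →
    (∀ φ : Kl ⟶ Kr, φ = 0) ∧ (∀ φ : Kl ⟶ Kr⟦(-1 : ℤ)⟧, φ = 0)

/-- `Defl U`: morphisms admitting a cocone in `U`. -/
def Defl (U : Set C) : MorphismProperty C :=
  fun _ _ f => ∃ K ∈ U, IsCoconeOf f K

/-- `Cocone L`: objects isomorphic to a cocone of some morphism in `L`. -/
def CoconeClass (L : MorphismProperty C) : Set C :=
  {K | ∃ (X Y : C) (f : X ⟶ Y), L f ∧ IsCoconeOf f K}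

/-- A `t`-structure `(U, V)` in a triangulated category. -/
structure IsTStructure (U V : Set C) : Prop where
  isoClosed_left : ∀ {X Y : C}, (X ≅ Y) → X ∈ U → Y ∈ U
  isoClosed_right : ∀ {X Y : C}, (X ≅ Y) → X ∈ V → Y ∈ V
  exists_triangle : ∀ X : C, ∃ (U' V' : C) (_ : U' ∈ U) (_ : V' ∈ V)
      (f : U' ⟶ X) (g : X ⟶ V') (h : V' ⟶ U'⟦(1 : ℤ)⟧),
      Triangle.mk f g h ∈ distTriang C
  hom_zero : ∀ {X Y : C}, X ∈ U → Y ∈ V → ∀ f : X ⟶ Y, f = 0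
  shift_mem : ∀ {X : C}, X ∈ U → X⟦(1 : ℤ)⟧ ∈ U

/-- A deflation factorization system `(L, R)` in a triangulated category. -/
structure IsDeflFactorizationSystem (L R : MorphismProperty C) : Prop where
  factor : ∀ {X Y : C} (f : X ⟶ Y),
    ∃ (K : C) (l : X ⟶ K) (r : K ⟶ Y), L l ∧ R r ∧ l ≫ r = f
  left_eq : ∀ {X Y : C} (f : X ⟶ Y),
    L f ↔ ∀ {Z W : C} (g : Z ⟶ W), R g → CoconePerp f g
  right_eq : ∀ {Z W : C} (g : Z ⟶ W),
    R g ↔ ∀ {X Y : C} (f : X ⟶ Y), L f → CoconePerp f g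

/-!
Cocones are unique up to isomorphism, so `Cocone (Defl U) = U` for every isomorphism-closed
class `U` of objects, and `Defl (Cocone L) = L` for every class `L` of morphisms whose
membership depends only on the cocone. The two halves of a deflation factorization system
have this property because `⊥` depends only on cocones.
-/

open ZeroObject

section

omit [IsTriangulated C]

lemma exists_isCoconeOf {X Y : C} (f : X ⟶ Y) : ∃ K : C, IsCoconeOf f K :=
  let ⟨K, g, h, hT⟩ := distinguished_cocone_triangle₁ f
  ⟨K, g, h, hT⟩

lemma isCoconeOf_zero (K : C) : IsCoconeOf (0 : K ⟶ 0) K :=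
  ⟨𝟙 K, 0, contractible_distinguished K⟩

lemma IsCoconeOf.of_iso {X Y K K' : C} {f : X ⟶ Y} (hK : IsCoconeOf f K) (e : K ≅ K') :
    IsCoconeOf f K' := by
  obtain ⟨g, h, hT⟩ := hK
  refine ⟨e.inv ≫ g, h ≫ e.hom⟦(1 : ℤ)⟧', isomorphic_distinguished _ hT _ ?_⟩
  refine Triangle.isoMk _ _ e.symm (Iso.refl _) (Iso.refl _) ?_ ?_ ?_ <;>
    simp [← Functor.map_comp, Triangle.mk]

/-- The rotated triangles share their first two objects and first morphism, so their third
vertices `K⟦1⟧` and `K'⟦1⟧` are isomorphic. -/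
lemma IsCoconeOf.nonempty_iso {X Y K K' : C} {f : X ⟶ Y} (hK : IsCoconeOf f K)
    (hK' : IsCoconeOf f K') : Nonempty (K ≅ K') := by
  obtain ⟨g, h, hT⟩ := hK
  obtain ⟨g', h', hT'⟩ := hK'
  have e : (Triangle.mk g f h).rotate ≅ (Triangle.mk g' f h').rotate :=
    isoTriangleOfIso₁₂ _ _ (rot_of_distTriang _ hT) (rot_of_distTriang _ hT')
      (Iso.refl _) (Iso.refl _) (by exact (Category.comp_id f).trans (Category.id_comp f).symm)
  exact ⟨(shiftFunctor C (1 : ℤ)).preimageIso (Triangle.π₃.mapIso e)⟩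

lemma CoconePerp.of_isCoconeOf_left {X Y X' Y' Z W K : C} {f : X ⟶ Y} {f' : X' ⟶ Y'}
    {g : Z ⟶ W} (h : CoconePerp f' g) (hf : IsCoconeOf f K) (hf' : IsCoconeOf f' K) :
    CoconePerp f g := fun Kl Kr hl hr =>
  let ⟨e⟩ := hf.nonempty_iso hl
  h Kl Kr (hf'.of_iso e) hr

lemma CoconePerp.of_isCoconeOf_right {X Y Z W Z' W' K : C} {f : X ⟶ Y} {g : Z ⟶ W}
    {g' : Z' ⟶ W'} (h : CoconePerp f g') (hg : IsCoconeOf g K) (hg' : IsCoconeOf g' K) :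
    CoconePerp f g := fun Kl Kr hl hr =>
  let ⟨e⟩ := hg.nonempty_iso hr
  h Kl Kr hl (hg'.of_iso e)

def RespectsCocones (L : MorphismProperty C) : Prop :=
  ∀ ⦃X Y X' Y' K : C⦄ (f : X ⟶ Y) (f' : X' ⟶ Y'),
    IsCoconeOf f K → IsCoconeOf f' K → L f' → L f

lemma coconeClass_defl_eq {U : Set C} (hU : ∀ {X Y : C}, (X ≅ Y) → X ∈ U → Y ∈ U) :
    CoconeClass (Defl U) = U := by
  ext K
  constructor
  · rintro ⟨X, Y, f, ⟨K₀, hK₀U, hK₀⟩, hK⟩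
    obtain ⟨e⟩ := hK₀.nonempty_iso hK
    exact hU e hK₀U
  · intro hK
    exact ⟨K, 0, 0, ⟨K, hK, isCoconeOf_zero K⟩, isCoconeOf_zero K⟩

lemma defl_coconeClass_eq {L : MorphismProperty C} (hL : RespectsCocones L) :
    Defl (CoconeClass L) = L := by
  ext X Y f
  constructor
  · rintro ⟨K, ⟨X', Y', f', hf', hK'⟩, hK⟩
    exact hL f f' hK hK' hf'
  · intro hf
    obtain ⟨K, hK⟩ := exists_isCoconeOf f
    exact ⟨K, ⟨X, Y, f, hf, hK⟩, hK⟩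

lemma IsDeflFactorizationSystem.respectsCocones_left {L R : MorphismProperty C}
    (h : IsDeflFactorizationSystem L R) : RespectsCocones L := by
  intro X Y X' Y' K f f' hf hf' hLf'
  rw [h.left_eq] at hLf' ⊢
  exact fun g hg => (hLf' g hg).of_isCoconeOf_left hf hf'

lemma IsDeflFactorizationSystem.respectsCocones_right {L R : MorphismProperty C}
    (h : IsDeflFactorizationSystem L R) : RespectsCocones R := by
  intro Z W Z' W' K g g' hg hg' hRg'
  rw [h.right_eq] at hRg' ⊢
  exact fun f hf => (hRg' f hf).of_isCoconeOf_right hg hg'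

end

/-- the assignments `(T, F) ↦ (Defl T, Defl F)` and
`(L, R) ↦ (Cocone L, Cocone R)` are mutually inverse. -/
theorem tStructure_deflFactorizationSystem_bijection :
    (∀ T F : Set C, IsTStructure T F →
      CoconeClass (Defl T) = T ∧ CoconeClass (Defl F) = F) ∧
    (∀ L R : MorphismProperty C, IsDeflFactorizationSystem L R →
      Defl (CoconeClass L) = L ∧ Defl (CoconeClass R) = R) :=
  ⟨fun _ _ h => ⟨coconeClass_defl_eq h.isoClosed_left, coconeClass_defl_eq h.isoClosed_right⟩,
    fun _ _ h => ⟨defl_coconeClass_eq h.respectsCocones_left,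
      defl_coconeClass_eq h.respectsCocones_right⟩⟩

end TriangFS
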